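/- Let M be a 2×2 matrix with integer entries, determinant 1 and |tr M| > 2. The induced map of the torus 𝕋² = ℝ²/ℤ², x + ℤ² ↦ Mx + ℤ², is well defined, preserves the Haar probability measure on 𝕋², and is ergodic with respect to it. -/

import Mathlib

/-!
The character `x ↦ exp (2πi ⟨n, x⟩)` of the torus pulls back under `x ↦ A x` to the character of
frequency `n A`, so the Fourier coefficients of an invariant `L²` function are constant along the
orbits `n, n A, n A², …`. They are square summable, hence vanish on every infinite orbit, and if
every nonzero frequency has an infinite orbit the invariant function is a.e. constant.

For `det A = 1` the traces `tₖ = tr Aᵏ` satisfy `tₖ₊₂ = t₁ tₖ₊₁ - tₖ` with `t₀ = 2`; when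
`|t₁| > 2` this forces `|tₖ|` to increase strictly, so no `Aᵏ` with `k ≥ 1` has trace `2`, i.e.
eigenvalue `1`. Thus no nonzero frequency is periodic.
-/

open MeasureTheory Matrix Filter Function AddCircle

noncomputable section

lemma AddCircle.toCircle_sum {T : ℝ} {ι : Type*} (s : Finset ι) (x : ι → AddCircle T) :
    toCircle (∑ i ∈ s, x i) = ∏ i ∈ s, toCircle (x i) :=
  map_prod toCircle_addChar.toMonoidHom (fun i => Multiplicative.ofAdd (x i)) s

lemma volume_unitAddCircle_eq_haarAddCircle :
    (volume : Measure UnitAddCircle) = haarAddCircle := by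
  rw [volume_eq_smul_haarAddCircle, ENNReal.ofReal_one, one_smul]

lemma eq_of_tendsto_cofinite_of_injective_orbit {ι X : Type*} [TopologicalSpace X] [T2Space X]
    {g : ι → X} {a : X} (hg : Tendsto g cofinite (nhds a)) {σ : ι → ι} (hσ : ∀ i, g (σ i) = g i)
    {i : ι} (hi : Injective fun k => σ^[k] i) : g i = a := by
  have horbit : Tendsto (fun k => σ^[k] i) atTop cofinite :=
    Nat.cofinite_eq_atTop ▸ hi.tendsto_cofinite
  exact tendsto_nhds_unique tendsto_const_nhds
    ((hg.comp horbit).congr fun k => congrFun (iterate_invariant (funext hσ) k) i)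

namespace Matrix

variable {R : Type*} [CommRing R]

open Polynomial in
lemma sq_fin_two_eq_trace_smul_sub_det_smul (A : Matrix (Fin 2) (Fin 2) R) :
    A ^ 2 = A.trace • A - A.det • 1 := by
  nontriviality R
  have h := A.aeval_self_charpoly
  rw [charpoly_fin_two] at h
  simp only [map_add, map_sub, map_pow, aeval_X, aeval_C, map_mul,
    Algebra.algebraMap_eq_smul_one] at h
  rw [← sub_eq_zero, ← h, smul_mul_assoc, one_mul]
  abel

lemma trace_fin_two_pow_add_two (A : Matrix (Fin 2) (Fin 2) R) (n : ℕ) :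
    (A ^ (n + 2)).trace = A.trace * (A ^ (n + 1)).trace - A.det * (A ^ n).trace := by
  rw [pow_add, sq_fin_two_eq_trace_smul_sub_det_smul, mul_sub, mul_smul_comm, mul_smul_comm,
    ← pow_succ, mul_one, trace_sub, trace_smul, trace_smul, smul_eq_mul, smul_eq_mul]

lemma trace_eq_two_of_vecMul_eq_self [IsDomain R] {B : Matrix (Fin 2) (Fin 2) R}
    (hdet : B.det = 1) {v : Fin 2 → R} (hv : v ≠ 0) (hfix : v ᵥ* B = v) : B.trace = 2 := by
  have hsing : (B - 1).det = 0 :=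
    exists_vecMul_eq_zero_iff.mp ⟨v, hv, by rw [vecMul_sub, hfix, vecMul_one, sub_self]⟩
  rw [det_fin_two, trace_fin_two] at *
  simp at hsing
  linear_combination hdet - hsing

variable [LinearOrder R] [IsStrictOrderedRing R]

lemma strictMono_abs_trace_pow {A : Matrix (Fin 2) (Fin 2) R} (hdet : A.det = 1)
    (htr : 2 < |A.trace|) : StrictMono fun n : ℕ => |(A ^ n).trace| := by
  refine strictMono_nat_of_lt_succ fun n => ?_
  induction n with
  | zero => simpa [trace_one] using htr
  | succ n ih =>
    have hrec := trace_fin_two_pow_add_two A n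
    rw [hdet, one_mul] at hrec
    have h1 : |A.trace| * |(A ^ (n + 1)).trace| ≤ |(A ^ (n + 2)).trace| + |(A ^ n).trace| := by
      rw [← abs_mul, ← sub_add_cancel (A.trace * _) ((A ^ n).trace), ← hrec]
      exact abs_add_le _ _
    nlinarith [abs_nonneg (A ^ n).trace]

lemma injective_vecMul_pow_of_two_lt_abs_trace {A : Matrix (Fin 2) (Fin 2) R}
    (hdet : A.det = 1) (htr : 2 < |A.trace|) {v : Fin 2 → R} (hv : v ≠ 0) :
    Injective fun k : ℕ => v ᵥ* A ^ k := by
  refine Injective.of_lt_imp_ne fun i j hij heq => ?_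
  obtain ⟨k, rfl⟩ := Nat.exists_eq_add_of_lt hij
  have hdet_pow : ∀ m, (A ^ m).det = 1 := fun m => by rw [det_pow, hdet, one_pow]
  have hunit : IsUnit (A ^ i) := (isUnit_iff_isUnit_det _).mpr (hdet_pow i ▸ isUnit_one)
  have hw : v ᵥ* A ^ i ≠ 0 := fun h =>
    hv (vecMul_injective_of_isUnit hunit (h.trans (zero_vecMul _).symm))
  have hfix : (v ᵥ* A ^ i) ᵥ* A ^ (k + 1) = v ᵥ* A ^ i := by
    rw [vecMul_vecMul, ← pow_add, ← add_assoc]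
    exact heq.symm
  have htwo := trace_eq_two_of_vecMul_eq_self (hdet_pow _) hw hfix
  have : |(A ^ 0).trace| < |(A ^ (k + 1)).trace| := strictMono_abs_trace_pow hdet htr k.succ_pos
  simp [htwo] at this

end Matrix

namespace UnitAddTorus

variable {d : Type*} [Fintype d]

def toralEndo (A : Matrix d d ℤ) : UnitAddTorus d →+ UnitAddTorus d where
  toFun x i := ∑ j, A i j • x j
  map_zero' := by ext; simp
  map_add' x y := by ext i; simp [smul_add, Finset.sum_add_distrib]

lemma toralEndo_apply (A : Matrix d d ℤ) (x : UnitAddTorus d) (i : d) :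
    toralEndo A x i = ∑ j, A i j • x j := rfl

lemma toralEndo_mul (A B : Matrix d d ℤ) (x : UnitAddTorus d) :
    toralEndo (A * B) x = toralEndo A (toralEndo B x) := by
  ext i
  simp only [toralEndo_apply, mul_apply, Finset.sum_smul, mul_smul, Finset.smul_sum]
  exact Finset.sum_comm

lemma toralEndo_smul_one [DecidableEq d] (k : ℤ) (x : UnitAddTorus d) :
    toralEndo (k • (1 : Matrix d d ℤ)) x = k • x := by
  ext i
  simp only [toralEndo_apply, Matrix.smul_apply, one_apply, smul_eq_mul, mul_ite, mul_one, mul_zero,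
    ite_smul, zero_smul, Finset.sum_ite_eq, Finset.mem_univ, if_true, Pi.smul_apply]

lemma continuous_toralEndo (A : Matrix d d ℤ) : Continuous (toralEndo A) :=
  continuous_pi fun i => continuous_finsetSum _ fun j _ =>
    (continuous_zsmul (A i j)).comp (continuous_apply j)

lemma surjective_toralEndo [DecidableEq d] {A : Matrix d d ℤ} (hA : A.det ≠ 0) :
    Surjective (toralEndo A) := by
  intro y
  obtain ⟨x, rfl⟩ := DivisibleBy.surjective_smul (UnitAddTorus d) ℤ hA y
  exact ⟨toralEndo A.adjugate x, by rw [← toralEndo_mul, mul_adjugate, toralEndo_smul_one]⟩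

lemma toralEndo_coe (A : Matrix d d ℤ) (x : d → ℝ) :
    toralEndo A (fun i => (x i : UnitAddCircle)) =
      fun i => ((A.map ((↑) : ℤ → ℝ) *ᵥ x) i : UnitAddCircle) := by
  ext i
  simp only [toralEndo_apply, mulVec, dotProduct, map_apply, ← zsmul_eq_mul]
  rw [← QuotientAddGroup.mk'_apply, map_sum]
  simp only [QuotientAddGroup.mk'_apply, QuotientAddGroup.mk_zsmul]

lemma mFourier_apply_eq_toCircle (n : d → ℤ) (x : UnitAddTorus d) :
    mFourier n x = toCircle (∑ i, n i • x i) := by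
  rw [AddCircle.toCircle_sum]
  exact (map_prod Circle.coeHom _ _).symm

lemma mFourier_toralEndo (A : Matrix d d ℤ) (n : d → ℤ) (x : UnitAddTorus d) :
    mFourier n (toralEndo A x) = mFourier (n ᵥ* A) x := by
  simp only [mFourier_apply_eq_toCircle, toralEndo_apply, Finset.smul_sum, smul_smul, vecMul,
    dotProduct, Finset.sum_smul]
  rw [Finset.sum_comm]

section Ergodicity

/- Mathlib's Fourier theory on `UnitAddTorus` is stated for this measure, which equals the global
`volume` only propositionally (`volume_unitAddCircle_eq_haarAddCircle`). -/
local instance : MeasureSpace UnitAddCircle := ⟨haarAddCircle⟩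

local instance : Measure.IsAddHaarMeasure (volume : Measure UnitAddCircle) :=
  inferInstanceAs (Measure.IsAddHaarMeasure haarAddCircle)

local instance : IsProbabilityMeasure (volume : Measure UnitAddCircle) :=
  inferInstanceAs (IsProbabilityMeasure haarAddCircle)

lemma measurePreserving_toralEndo [DecidableEq d] {A : Matrix d d ℤ} (hA : A.det ≠ 0) :
    MeasurePreserving (toralEndo A) :=
  (toralEndo A).measurePreserving (continuous_toralEndo A) (surjective_toralEndo hA) rfl

variable {T : UnitAddTorus d → UnitAddTorus d} {σ : (d → ℤ) → (d → ℤ)}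

lemma mFourierCoeff_eq_of_comp_ae_eq {E : Type*} [NormedAddCommGroup E] [NormedSpace ℂ E]
    (hT : MeasurePreserving T) (hσ : ∀ n x, mFourier n (T x) = mFourier (σ n) x)
    {g : UnitAddTorus d → E} (hg : AEStronglyMeasurable g) (hgT : g ∘ T =ᵐ[volume] g)
    (n : d → ℤ) : mFourierCoeff g (σ n) = mFourierCoeff g n := by
  calc mFourierCoeff g (σ n) = ∫ x, mFourier (-n) (T x) • g (T x) := by
        refine integral_congr_ae ?_
        filter_upwards [hgT] with x hx
        rw [mFourier_neg, mFourier_neg, hσ, ← hx]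
        rfl
    _ = ∫ y, mFourier (-n) y • g y ∂(Measure.map T volume) := by
        refine (integral_map (f := fun y => mFourier (-n) y • g y) hT.aemeasurable ?_).symm
        rw [hT.map_eq]
        exact (mFourier (-n)).continuous.aestronglyMeasurable.smul hg
    _ = mFourierCoeff g n := by rw [hT.map_eq, mFourierCoeff]

lemma ae_eq_const_of_mFourierCoeff_eq_zero (f : Lp ℂ 2 (volume : Measure (UnitAddTorus d)))
    (hf : ∀ n ≠ 0, mFourierCoeff f n = 0) : f =ᵐ[volume] fun _ => mFourierCoeff f 0 := by
  set c := mFourierCoeff f 0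
  have hsum : HasSum (fun n => mFourierCoeff f n • mFourierLp 2 n) (c • mFourierLp 2 0) :=
    hasSum_single 0 fun n hn => by rw [hf n hn, zero_smul]
  rw [(hasSum_mFourier_series_L2 f).unique hsum]
  filter_upwards [Lp.coeFn_smul c (mFourierLp 2 (0 : d → ℤ)),
    coeFn_mFourierLp 2 (0 : d → ℤ)] with x hx h0
  rw [hx, Pi.smul_apply, h0, mFourier_zero, ContinuousMap.one_apply, smul_eq_mul, mul_one]

theorem ergodic_of_mFourier_comp (hT : MeasurePreserving T)
    (hσ : ∀ n x, mFourier n (T x) = mFourier (σ n) x)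
    (horbit : ∀ n ≠ 0, Injective fun k => σ^[k] n) : Ergodic T := by
  refine ⟨hT, ⟨fun s hs hTs => ?_⟩⟩
  set f := indicatorConstLp 2 hs (measure_ne_top volume s) (1 : ℂ)
  have hf : ⇑f =ᵐ[volume] s.indicator fun _ => (1 : ℂ) := indicatorConstLp_coeFn
  have hfT : ⇑f ∘ T =ᵐ[volume] f := by
    refine (hT.quasiMeasurePreserving.ae_eq_comp hf).trans (.trans (.of_eq ?_) hf.symm)
    funext x
    rw [Function.comp_apply, ← Set.indicator_comp_right, hTs]
    rfl
  have hinv := mFourierCoeff_eq_of_comp_ae_eq hT hσ (Lp.aestronglyMeasurable f) hfT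
  have hzero : ∀ n ≠ 0, mFourierCoeff f n = 0 := fun n hn => by
    simpa using eq_of_tendsto_cofinite_of_injective_orbit
      (hasSum_sq_mFourierCoeff f).summable.tendsto_cofinite_zero (fun n => by simp only [hinv])
      (horbit n hn)
  have hconst := hf.symm.trans (ae_eq_const_of_mFourierCoeff_eq_zero f hzero)
  exact ((EventuallyConst.const _).congr hconst.symm).of_indicator_const (one_ne_zero (α := ℂ))

theorem ergodic_toralEndo [DecidableEq d] {A : Matrix d d ℤ} (hA : A.det ≠ 0)
    (horbit : ∀ v ≠ 0, Injective fun k : ℕ => v ᵥ* A ^ k) : Ergodic (toralEndo A) := by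
  have hiterate : ∀ (v : d → ℤ) (k : ℕ), (· ᵥ* A)^[k] v = v ᵥ* A ^ k := fun v k => by
    induction k with
    | zero => simp
    | succ k ih => rw [iterate_succ_apply', ih, vecMul_vecMul, pow_succ]
  refine ergodic_of_mFourier_comp (measurePreserving_toralEndo hA) (mFourier_toralEndo A)
    fun v hv => ?_
  simpa only [hiterate] using horbit v hv

end Ergodicity

end UnitAddTorus

/-- Let `M` be a `2×2` integer matrix with determinant `1` and `|tr M| > 2`.
The induced map of the torus `𝕋² = ℝ²/ℤ²`, `x + ℤ² ↦ M x + ℤ²`, is well defined (i.e. there is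
a unique map of the torus intertwining the quotient projection with `x ↦ M x`), preserves the
Haar probability measure on `𝕋²`, and is ergodic with respect to it. -/
theorem cat_map_ergodic
    (M : Matrix (Fin 2) (Fin 2) ℤ) (hdet : M.det = 1) (htr : |M.trace| > 2) :
    IsProbabilityMeasure (volume : Measure (UnitAddCircle × UnitAddCircle)) ∧
    ∃! T : UnitAddCircle × UnitAddCircle → UnitAddCircle × UnitAddCircle,
      (∀ x : Fin 2 → ℝ,
        T (↑(x 0), ↑(x 1)) =
          (↑(Matrix.mulVec (M.map ((↑) : ℤ → ℝ)) x 0), ↑(Matrix.mulVec (M.map ((↑) : ℤ → ℝ)) x 1))) ∧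
      Ergodic T (volume : Measure (UnitAddCircle × UnitAddCircle)) := by
  have hvolume : (volume : Measure (UnitAddCircle × UnitAddCircle)) =
      haarAddCircle.prod haarAddCircle := by
    rw [Measure.volume_eq_prod, volume_unitAddCircle_eq_haarAddCircle]
  let e := MeasurableEquiv.piFinTwo fun _ : Fin 2 => UnitAddCircle
  have he : MeasurePreserving e (Measure.pi fun _ => haarAddCircle) volume :=
    hvolume ▸ measurePreserving_piFinTwo _
  have hformula : ∀ x : Fin 2 → ℝ, (e ∘ UnitAddTorus.toralEndo M ∘ e.symm) (↑(x 0), ↑(x 1)) =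
      (↑((M.map ((↑) : ℤ → ℝ) *ᵥ x) 0), ↑((M.map ((↑) : ℤ → ℝ) *ᵥ x) 1)) := fun x => by
    have : e.symm (↑(x 0), ↑(x 1)) = fun i => (x i : UnitAddCircle) := by
      funext i; fin_cases i <;> rfl
    simp only [Function.comp_apply, this, UnitAddTorus.toralEndo_coe]
    rfl
  refine ⟨hvolume ▸ inferInstance, e ∘ UnitAddTorus.toralEndo M ∘ e.symm, ⟨hformula, ?_⟩, ?_⟩
  · exact he.ergodic_conjugate_iff.mpr (UnitAddTorus.ergodic_toralEndo (hdet ▸ one_ne_zero)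
      fun v hv => Matrix.injective_vecMul_pow_of_two_lt_abs_trace hdet htr hv)
  · rintro T ⟨hT, -⟩
    funext ⟨a, b⟩
    induction a using QuotientAddGroup.induction_on
    induction b using QuotientAddGroup.induction_on
    exact (hT ![_, _]).trans (hformula ![_, _]).symm
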